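/- Let Ĥ be a signed graph without purely red edges. If Ĥ contains a flower P_1, P_2, …, P_n, then Ĥ contains a chain. -/
import Mathlib


variable {V : Type*}

/-- A petal in a signed graph with edge relation `E` and bicoloured edges `bic`
(blue edges are the edges that are not bicoloured): a pair of walks
`x, l_1, …, l_k` and `x, u_1, …, u_k` such that `xl_1` is bicoloured, `xu_1` is blue,
and `l_iu_{i+1}` is not an edge for `i = 1, …, k-1`.  It has length `k`; its lower
terminal is `l_k` and its upper terminal is `u_k`. -/
def IsPetal (E bic : V → V → Prop) (x : V) (l u : ℕ → V) (k : ℕ) : Prop :=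
  0 < k ∧ bic x (l 1) ∧ (E x (u 1) ∧ ¬ bic x (u 1)) ∧
    ∀ i, 1 ≤ i → i ≤ k - 1 →
      E (l i) (l (i + 1)) ∧ E (u i) (u (i + 1)) ∧ ¬ E (l i) (u (i + 1))

/-- A chain in a signed graph with edge relation `E` and bicoloured edges `bic`:
two walks `U = u_0, …, u_k` and `D = d_0, …, d_k` of equal length from `u` to `v`,
with `u_0u_1` and `d_{k-1}d_k` unicoloured, `u_0d_1` and `u_{k-1}u_k` bicoloured, and
for `1 ≤ i ≤ k-2` either `u_iu_{i+1}`, `d_id_{i+1}` are edges while `d_iu_{i+1}` is not,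
or `u_iu_{i+1}`, `d_id_{i+1}` are bicoloured while `d_iu_{i+1}` is not bicoloured. -/
def HasChain (E bic : V → V → Prop) : Prop :=
  ∃ (k : ℕ) (U D : ℕ → V), 0 < k ∧ U 0 = D 0 ∧ U k = D k ∧
    (E (U 0) (U 1) ∧ ¬ bic (U 0) (U 1)) ∧
    (E (D (k - 1)) (D k) ∧ ¬ bic (D (k - 1)) (D k)) ∧
    bic (U 0) (D 1) ∧ bic (U (k - 1)) (U k) ∧
    ∀ i, 1 ≤ i → i ≤ k - 2 →
      ((E (U i) (U (i + 1)) ∧ E (D i) (D (i + 1)) ∧ ¬ E (D i) (U (i + 1))) ∨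
       (bic (U i) (U (i + 1)) ∧ bic (D i) (D (i + 1)) ∧ ¬ bic (D i) (U (i + 1))))

namespace Statement5

/-- A chain prefix: two walks of common length `k ≥ 1` from a common start, whose
first edges are blue (top) and bicoloured (bottom), satisfying the chain middle
condition at all steps `1 ≤ i ≤ k-1`; ends at bottom `d`, top `u`. -/
def Pre (E bic : V → V → Prop) (d u : V) : Prop :=
  ∃ (k : ℕ) (U D : ℕ → V), 1 ≤ k ∧ U 0 = D 0 ∧
    (E (U 0) (U 1) ∧ ¬ bic (U 0) (U 1)) ∧ bic (U 0) (D 1) ∧ U k = u ∧ D k = d ∧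
    ∀ i, 1 ≤ i → i ≤ k - 1 →
      ((E (U i) (U (i + 1)) ∧ E (D i) (D (i + 1)) ∧ ¬ E (D i) (U (i + 1))) ∨
       (bic (U i) (U (i + 1)) ∧ bic (D i) (D (i + 1)) ∧ ¬ bic (D i) (U (i + 1))))

/-- A petal segment: a petal from apex `x` whose walks start at `a` (lower), `b`
(upper) and end at `c` (lower), `d` (upper), of length `k`. -/
def PSeg (E bic : V → V → Prop) (x a b c d : V) (k : ℕ) : Prop :=
  ∃ l u : ℕ → V, IsPetal E bic x l u k ∧ l 1 = a ∧ u 1 = b ∧ l k = c ∧ u k = d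

variable {E bic : V → V → Prop}

theorem pre_start {a u1 d1 : V} (h1 : E a u1) (h2 : ¬ bic a u1) (h3 : bic a d1) :
    Pre E bic d1 u1 := by
  refine ⟨1, (fun i => if i = 0 then a else u1), (fun i => if i = 0 then a else d1),
    le_refl 1, by simp, by simpa using ⟨h1, h2⟩, by simpa using h3, by simp, by simp, ?_⟩
  intro i hi1 hi2
  omega

theorem pre_step {d u d' u' : V} (h : Pre E bic d u)
    (h1 : E u u') (h2 : E d d') (h3 : ¬ E d u') : Pre E bic d' u' := by
  obtain ⟨k, U, D, hk, h00, hstart, hbic1, hU, hD, hmid⟩ := h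
  refine ⟨k + 1, (fun i => if i ≤ k then U i else u'), (fun i => if i ≤ k then D i else d'),
    by omega, ?_, ?_, ?_, ?_, ?_, ?_⟩
  · simp [h00]
  · have : (1:ℕ) ≤ k := hk
    simpa [this] using hstart
  · have : (1:ℕ) ≤ k := hk
    simpa [this] using hbic1
  · simp
  · simp
  · intro i hi1 hi2
    rcases Nat.lt_or_ge i k with hik | hik
    · have e1 : i ≤ k := by omega
      have e2 : i + 1 ≤ k := by omega
      simp only [e1, e2, if_pos]
      exact hmid i hi1 (by omega)
    · have hik' : i = k := by omega
      subst hik'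
      have e1 : i ≤ i := le_refl i
      have e2 : ¬ (i + 1 ≤ i) := by omega
      simp only [e1, e2, if_pos, if_neg, if_false]
      left
      rw [hU, hD]
      exact ⟨h1, h2, h3⟩

theorem pre_end {d u v : V} (h : Pre E bic d u)
    (h1 : bic u v) (h2 : E d v) (h3 : ¬ bic d v) : HasChain E bic := by
  obtain ⟨k, U, D, hk, h00, hstart, hbic1, hU, hD, hmid⟩ := h
  refine ⟨k + 1, (fun i => if i ≤ k then U i else v), (fun i => if i ≤ k then D i else v),
    by omega, by simp [h00], by simp, ?_, ?_, ?_, ?_, ?_⟩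
  · have : (1:ℕ) ≤ k := hk
    simpa [this] using hstart
  · have e0 : k + 1 - 1 = k := by omega
    have e2 : ¬ (k + 1 ≤ k) := by omega
    simp only [e0, le_refl, if_pos, e2, if_neg, if_false]
    rw [hD]
    exact ⟨h2, h3⟩
  · have : (1:ℕ) ≤ k := hk
    simpa [this] using hbic1
  · have e0 : k + 1 - 1 = k := by omega
    have e2 : ¬ (k + 1 ≤ k) := by omega
    simp only [e0, le_refl, if_pos, e2, if_neg, if_false]
    rw [hU]; exact h1
  · intro i hi1 hi2
    have e1 : i ≤ k := by omega
    have e2 : i + 1 ≤ k := by omega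
    simp only [e1, e2, if_pos]
    exact hmid i hi1 (by omega)

theorem ps_start {x a b : V} (h1 : bic x a) (h2 : E x b) (h3 : ¬ bic x b) :
    PSeg E bic x a b a b 1 := by
  refine ⟨(fun _ => a), (fun _ => b), ⟨one_pos, h1, ⟨h2, h3⟩, ?_⟩, rfl, rfl, rfl, rfl⟩
  intro i hi1 hi2
  omega

theorem ps_step {x a b c d c' d' : V} {k : ℕ} (h : PSeg E bic x a b c d k)
    (h1 : E c c') (h2 : E d d') (h3 : ¬ E c d') : PSeg E bic x a b c' d' (k + 1) := by
  obtain ⟨l, u, ⟨hk, hbic, hblue, hlad⟩, ha, hb, hc, hd⟩ := h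
  have hk1 : (1:ℕ) ≤ k := hk
  refine ⟨(fun i => if i ≤ k then l i else c'), (fun i => if i ≤ k then u i else d'),
    ⟨by omega, by simpa [hk1] using hbic, by simpa [hk1] using hblue, ?_⟩,
    by simpa [hk1] using ha, by simpa [hk1] using hb, by simp, by simp⟩
  intro i hi1 hi2
  rcases Nat.lt_or_ge i k with hik | hik
  · have e1 : i ≤ k := by omega
    have e2 : i + 1 ≤ k := by omega
    simp only [e1, e2, if_pos]
    exact hlad i hi1 (by omega)
  · have hik' : i = k := by omega
    subst hik'
    have e2 : ¬ (i + 1 ≤ i) := by omega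
    simp only [le_refl, if_pos, e2, if_neg, if_false]
    rw [hc, hd]
    exact ⟨h1, h2, h3⟩


section PetalLemmas

variable {E bic : V → V → Prop}
variable (hEs : ∀ a b, E a b → E b a) (hbs : ∀ a b, bic a b → bic b a)
variable (hbE : ∀ a b, bic a b → E a b)
variable {x : V} {l u : ℕ → V} {k : ℕ}

theorem petal_arun (hp : IsPetal E bic x l u k) :
    ∀ s, 1 ≤ s → s ≤ k → Pre E bic (l s) (u s) := by
  intro s
  induction s with
  | zero => intro h; omega
  | succ m ih =>
    intro h1 h2
    rcases Nat.eq_zero_or_pos m with hm | hm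
    · subst hm
      exact pre_start hp.2.2.1.1 hp.2.2.1.2 hp.2.1
    · have hlad := hp.2.2.2 m hm (by omega)
      exact pre_step (ih hm (by omega)) hlad.2.1 hlad.1 hlad.2.2

include hEs hbs in
theorem petal_bdesc (hp : IsPetal E bic x l u k) :
    ∀ s, 1 ≤ s → s ≤ k → Pre E bic (u s) (l s) → HasChain E bic := by
  intro s
  induction s with
  | zero => intro h; omega
  | succ m ih =>
    intro h1 h2 hpre
    rcases Nat.eq_zero_or_pos m with hm | hm
    · subst hm
      exact pre_end hpre (hbs _ _ hp.2.1) (hEs _ _ hp.2.2.1.1)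
        (fun hb => hp.2.2.1.2 (hbs _ _ hb))
    · have hlad := hp.2.2.2 m hm (by omega)
      refine ih hm (by omega) (pre_step hpre (hEs _ _ hlad.1) (hEs _ _ hlad.2.1) ?_)
      exact fun he => hlad.2.2 (hEs _ _ he)

theorem petal_pseg_prefix (hp : IsPetal E bic x l u k) :
    ∀ s, 1 ≤ s → s ≤ k → PSeg E bic x (l 1) (u 1) (l s) (u s) s := by
  intro s
  induction s with
  | zero => intro h; omega
  | succ m ih =>
    intro h1 h2
    rcases Nat.eq_zero_or_pos m with hm | hm
    · subst hm
      exact ps_start hp.2.1 hp.2.2.1.1 hp.2.2.1.2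
    · have hlad := hp.2.2.2 m hm (by omega)
      exact ps_step (ih hm (by omega)) hlad.1 hlad.2.1 hlad.2.2

end PetalLemmas


section Key

variable {E bic : V → V → Prop}
variable (hEs : ∀ a b, E a b → E b a) (hbs : ∀ a b, bic a b → bic b a)
variable (hbE : ∀ a b, bic a b → E a b)

/-- The oscillating pad walk below `tn`. -/
def padc (tn d : V) : ℕ → V := fun m => if m % 2 = 0 then tn else d

/-- The tour of petal 1: descend the lower walk, pass the apex, ascend the upper
walk. -/
def tourf (x1 : V) (l1 u1 : ℕ → V) (k1 : ℕ) : ℕ → V := fun m =>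
  if m < k1 then l1 (k1 - m) else if m = k1 then x1 else u1 (m - k1)

theorem padc_even {tn d : V} {m : ℕ} (h : m % 2 = 0) : padc tn d m = tn := by
  simp [padc, h]

theorem padc_odd {tn d : V} {m : ℕ} (h : m % 2 = 1) : padc tn d m = d := by
  simp [padc, h]

theorem padc_congr {tn d : V} {m m' : ℕ} (h : m % 2 = m' % 2) :
    padc tn d m = padc tn d m' := by
  rcases Nat.mod_two_eq_zero_or_one m with h0 | h0
  · rw [padc_even h0, padc_even (by omega)]
  · rw [padc_odd h0, padc_odd (by omega)]

theorem tourf_low {x1 : V} {l1 u1 : ℕ → V} {k1 m : ℕ} (h : m < k1) :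
    tourf x1 l1 u1 k1 m = l1 (k1 - m) := by simp [tourf, h]

theorem tourf_apex {x1 : V} {l1 u1 : ℕ → V} {k1 : ℕ} :
    tourf x1 l1 u1 k1 k1 = x1 := by simp [tourf]

theorem tourf_up {x1 : V} {l1 u1 : ℕ → V} {k1 m : ℕ} (h : k1 < m) :
    tourf x1 l1 u1 k1 m = u1 (m - k1) := by
  have h1 : ¬ m < k1 := by omega
  have h2 : m ≠ k1 := by omega
  simp [tourf, h1, h2]

section KeyMain

variable {x0 x1 tn : V} {l0 u0 l1 u1 : ℕ → V} {k0 k1 : ℕ}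

/-- the pad partner of `tn` -/
def dpad (x0 : V) (l0 : ℕ → V) (k0 : ℕ) : V := if k0 = 1 then x0 else l0 (k0 - 1)

include hEs hbE in
theorem pad_edge (hp0 : IsPetal E bic x0 l0 u0 k0) (hlast : l0 k0 = tn) :
    E tn (dpad x0 l0 k0) := by
  have hk0 : 0 < k0 := hp0.1
  by_cases h : k0 = 1
  · have : l0 1 = tn := by rw [← hlast, h]
    rw [dpad, if_pos h, ← this]
    exact hEs _ _ (hbE _ _ hp0.2.1)
  · have hl := hp0.2.2.2 (k0 - 1) (by omega) (by omega)
    have e : k0 - 1 + 1 = k0 := by omega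
    rw [e] at hl
    rw [dpad, if_neg h]
    exact hEs _ _ (hlast ▸ hl.1)

include hEs hbE in
theorem padc_step (hp0 : IsPetal E bic x0 l0 u0 k0) (hlast : l0 k0 = tn) (m : ℕ) :
    E (padc tn (dpad x0 l0 k0) m) (padc tn (dpad x0 l0 k0) (m + 1)) := by
  rcases Nat.mod_two_eq_zero_or_one m with h0 | h0
  · rw [padc_even h0, padc_odd (by omega)]
    exact pad_edge hEs hbE hp0 hlast
  · rw [padc_odd h0, padc_even (by omega)]
    exact hEs _ _ (pad_edge hEs hbE hp0 hlast)

include hEs hbE in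
theorem tour_edge (hp1 : IsPetal E bic x1 l1 u1 k1) {m : ℕ} (h1 : 1 ≤ m) (h2 : m ≤ 2 * k1) :
    E (tourf x1 l1 u1 k1 (m - 1)) (tourf x1 l1 u1 k1 m) := by
  have hk1 : 0 < k1 := hp1.1
  rcases lt_trichotomy m k1 with hm | hm | hm
  · rw [tourf_low (by omega), tourf_low hm]
    have hl := hp1.2.2.2 (k1 - m) (by omega) (by omega)
    have e : k1 - (m - 1) = k1 - m + 1 := by omega
    rw [e]
    exact hEs _ _ hl.1
  · rw [hm, tourf_low (by omega), tourf_apex]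
    have e : k1 - (k1 - 1) = 1 := by omega
    rw [e]
    exact hEs _ _ (hbE _ _ hp1.2.1)
  · rcases Nat.eq_or_lt_of_le (Nat.succ_le_of_lt hm) with hm2 | hm2
    · subst hm2
      rw [Nat.succ_sub_one, tourf_apex, tourf_up (by omega)]
      have e2 : k1.succ - k1 = 1 := by omega
      rw [e2]
      exact hp1.2.2.1.1
    · rw [tourf_up (by omega), tourf_up hm]
      have hl := hp1.2.2.2 (m - 1 - k1) (by omega) (by omega)
      have e : m - k1 = m - 1 - k1 + 1 := by omega
      rw [e]
      exact hl.2.1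
end KeyMain
end Key

section KeyMain2

variable {E bic : V → V → Prop}
variable (hEs : ∀ a b, E a b → E b a) (hbs : ∀ a b, bic a b → bic b a)
variable (hbE : ∀ a b, bic a b → E a b)
variable {x0 x1 tn : V} {l0 u0 l1 u1 : ℕ → V} {k0 k1 : ℕ}

include hEs hbE in
theorem pad_desc (hp0 : IsPetal E bic x0 l0 u0 k0) (hp1 : IsPetal E bic x1 l1 u1 k1)
    (hglue : u0 k0 = l1 k1) (hlast : l0 k0 = tn) :
    ∀ m, m ≤ k1 - 1 →
      (∀ m', 1 ≤ m' → m' ≤ m →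
        ¬ E (padc tn (dpad x0 l0 k0) (m' - 1)) (tourf x1 l1 u1 k1 m')) →
      Pre E bic (padc tn (dpad x0 l0 k0) m) (l1 (k1 - m)) := by
  intro m
  induction m with
  | zero =>
    intro _ _
    have base := petal_arun hp0 k0 hp0.1 le_rfl
    rw [hlast, hglue] at base
    simpa [padc_even (show (0:ℕ) % 2 = 0 from rfl)] using base
  | succ m ih =>
    intro hm hcond
    have hk1 : 0 < k1 := hp1.1
    have hprev := ih (by omega) (fun m' a b => hcond m' a (by omega))
    have hl := hp1.2.2.2 (k1 - m - 1) (by omega) (by omega)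
    have e : k1 - m - 1 + 1 = k1 - m := by omega
    rw [e] at hl
    have e2 : k1 - (m + 1) = k1 - m - 1 := by omega
    rw [e2]
    refine pre_step hprev (hEs _ _ hl.1) (padc_step hEs hbE hp0 hlast m) ?_
    have hcc := hcond (m + 1) (by omega) le_rfl
    rw [tourf_low (by omega)] at hcc
    have e3 : m + 1 - 1 = m := by omega
    rw [e3, e2] at hcc
    exact hcc

include hEs hbs hbE in
theorem jump_chain (hp0 : IsPetal E bic x0 l0 u0 k0) (hp1 : IsPetal E bic x1 l1 u1 k1)
    (hglue : u0 k0 = l1 k1) (hlast : l0 k0 = tn) {s' : ℕ}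
    (h1 : 1 ≤ s') (h2 : s' ≤ k1 - 1)
    (hedge : E (padc tn (dpad x0 l0 k0) (k1 - s' - 1)) (u1 s'))
    (hpre : ∀ m', 1 ≤ m' → m' ≤ k1 - s' →
      ¬ E (padc tn (dpad x0 l0 k0) (m' - 1)) (tourf x1 l1 u1 k1 m')) :
    HasChain E bic := by
  have hk1 : 0 < k1 := hp1.1
  have hpad := pad_desc hEs hbE hp0 hp1 hglue hlast (k1 - s' - 1) (by omega)
    (fun m' a b => hpre m' a (by omega))
  have e : k1 - (k1 - s' - 1) = s' + 1 := by omega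
  rw [e] at hpad
  have hll := hp1.2.2.2 s' h1 h2
  have hcross : ¬ E (padc tn (dpad x0 l0 k0) (k1 - s' - 1)) (l1 s') := by
    have hcc := hpre (k1 - s') (by omega) le_rfl
    rw [tourf_low (by omega)] at hcc
    have e2 : k1 - (k1 - s') = s' := by omega
    have e3 : k1 - s' - 1 = k1 - s' - 1 := rfl
    rw [e2] at hcc
    exact hcc
  have hstep := pre_step hpad (hEs _ _ hll.1) hedge hcross
  exact petal_bdesc hEs hbs hp1 s' h1 (by omega) hstep

include hEs hbs hbE in
theorem early_end (hp0 : IsPetal E bic x0 l0 u0 k0) (hp1 : IsPetal E bic x1 l1 u1 k1)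
    (hglue : u0 k0 = l1 k1) (hlast : l0 k0 = tn)
    (hedge : E (padc tn (dpad x0 l0 k0) (k1 - 1)) x1)
    (hnb : ¬ bic (padc tn (dpad x0 l0 k0) (k1 - 1)) x1)
    (hpre : ∀ m', 1 ≤ m' → m' ≤ k1 - 1 →
      ¬ E (padc tn (dpad x0 l0 k0) (m' - 1)) (tourf x1 l1 u1 k1 m')) :
    HasChain E bic := by
  have hk1 : 0 < k1 := hp1.1
  have hpad := pad_desc hEs hbE hp0 hp1 hglue hlast (k1 - 1) le_rfl hpre
  have e : k1 - (k1 - 1) = 1 := by omega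
  rw [e] at hpad
  exact pre_end hpad (hbs _ _ hp1.2.1) hedge hnb

include hEs hbs hbE in
theorem full_jump (hp0 : IsPetal E bic x0 l0 u0 k0) (hp1 : IsPetal E bic x1 l1 u1 k1)
    (hglue : u0 k0 = l1 k1) (hlast : l0 k0 = tn)
    (hasm : ∀ (y a b : V) (K : ℕ), PSeg E bic y a b tn (u1 k1) K → HasChain E bic)
    (hedge : E (dpad x0 l0 k0) (u1 k1)) : HasChain E bic := by
  have hk0 : 0 < k0 := hp0.1
  have hk1 : 0 < k1 := hp1.1
  by_cases h01 : k0 = 1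
  · have hd : dpad x0 l0 k0 = x0 := by rw [dpad, if_pos h01]
    rw [hd] at hedge
    by_cases hb : bic x0 (u1 k1)
    · have h1 : E x0 (u0 k0) := by rw [h01]; exact hp0.2.2.1.1
      have h2 : ¬ bic x0 (u0 k0) := by rw [h01]; exact hp0.2.2.1.2
      have hpre := pre_start h1 h2 hb
      rw [hglue] at hpre
      exact petal_bdesc hEs hbs hp1 k1 hk1 le_rfl hpre
    · have hl1tn : l0 1 = tn := by rw [← hlast, h01]
      have hbic : bic x0 tn := hl1tn ▸ hp0.2.1
      exact hasm _ _ _ _ (ps_start hbic hedge hb)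
  · have hd : dpad x0 l0 k0 = l0 (k0 - 1) := by rw [dpad, if_neg h01]
    rw [hd] at hedge
    have hpre0 := petal_arun hp0 (k0 - 1) (by omega) (by omega)
    have hl := hp0.2.2.2 (k0 - 1) (by omega) (by omega)
    have e : k0 - 1 + 1 = k0 := by omega
    rw [e] at hl
    have hstep := pre_step hpre0 hl.2.1 hedge hl.2.2
    rw [hglue] at hstep
    exact petal_bdesc hEs hbs hp1 k1 hk1 le_rfl hstep

end KeyMain2


section Builders

variable {E bic : V → V → Prop}
variable (hEs : ∀ a b, E a b → E b a) (hbs : ∀ a b, bic a b → bic b a)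
variable (hbE : ∀ a b, bic a b → E a b)
variable {x0 x1 tn : V} {l0 u0 l1 u1 : ℕ → V} {k0 k1 : ℕ}

include hEs hbE in
theorem w1_build (hp0 : IsPetal E bic x0 l0 u0 k0) (hp1 : IsPetal E bic x1 l1 u1 k1)
    (hglue : u0 k0 = l1 k1) (hlast : l0 k0 = tn)
    (hall : ∀ m, 1 ≤ m → m ≤ 2 * k1 →
      ¬ E (padc tn (dpad x0 l0 k0) (m - 1)) (tourf x1 l1 u1 k1 m)) :
    PSeg E bic x0 (l0 1) (u0 1) tn (u1 k1) (k0 + 2 * k1) := by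
  have hk0 : 0 < k0 := hp0.1
  have hk1 : 0 < k1 := hp1.1
  have ind : ∀ m, m ≤ 2 * k1 → PSeg E bic x0 (l0 1) (u0 1)
      (padc tn (dpad x0 l0 k0) m) (tourf x1 l1 u1 k1 m) (k0 + m) := by
    intro m
    induction m with
    | zero =>
      intro _
      have base := petal_pseg_prefix hp0 k0 hk0 le_rfl
      rw [hlast, hglue] at base
      have e0 : tourf x1 l1 u1 k1 0 = l1 k1 := by
        rw [tourf_low hk1, Nat.sub_zero]
      rw [padc_even (show (0:ℕ) % 2 = 0 from rfl), e0]
      simpa using base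
    | succ m ih =>
      intro hm
      have hcross : ¬ E (padc tn (dpad x0 l0 k0) m) (tourf x1 l1 u1 k1 (m + 1)) := by
        have := hall (m + 1) (by omega) hm
        have e3 : m + 1 - 1 = m := by omega
        rwa [e3] at this
      have hte := tour_edge hEs hbE hp1 (show 1 ≤ m + 1 by omega) hm
      have e3 : m + 1 - 1 = m := by omega
      rw [e3] at hte
      exact ps_step (ih (by omega)) (padc_step hEs hbE hp0 hlast m) hte hcross
  have final := ind (2 * k1) le_rfl
  rw [padc_even (by omega), tourf_up (by omega)] at final
  have e : 2 * k1 - k1 = k1 := by omega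
  rwa [e] at final

include hEs hbE in
theorem p1'_build (hp0 : IsPetal E bic x0 l0 u0 k0) (hp1 : IsPetal E bic x1 l1 u1 k1)
    (hglue : u0 k0 = l1 k1) (hlast : l0 k0 = tn) {r : ℕ} (hr1 : 1 ≤ r) (hr2 : r ≤ k1 - 1)
    (hedge : E (padc tn (dpad x0 l0 k0) (k1 - r - 1)) (l1 r))
    (hall2 : ∀ m, k1 + r + 2 ≤ m → m ≤ 2 * k1 →
      ¬ E (padc tn (dpad x0 l0 k0) (m - 1)) (tourf x1 l1 u1 k1 m)) :
    PSeg E bic x1 (l1 1) (u1 1) tn (u1 k1) k1 := by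
  have hk1 : 0 < k1 := hp1.1
  have base := petal_pseg_prefix hp1 r hr1 (by omega)
  have hl := hp1.2.2.2 r hr1 hr2
  have step1 := ps_step base (hEs _ _ hedge) hl.2.1 hl.2.2
  have ind : ∀ j, j ≤ k1 - r - 1 → PSeg E bic x1 (l1 1) (u1 1)
      (padc tn (dpad x0 l0 k0) (k1 - r - 1 + j)) (u1 (r + 1 + j)) (r + 1 + j) := by
    intro j
    induction j with
    | zero =>
      intro _
      simpa using step1
    | succ j ih =>
      intro hj
      have hlu := hp1.2.2.2 (r + 1 + j) (by omega) (by omega)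
      have hcross : ¬ E (padc tn (dpad x0 l0 k0) (k1 - r - 1 + j))
          (u1 (r + 1 + j + 1)) := by
        have hc := hall2 (k1 + (r + 1 + j + 1)) (by omega) (by omega)
        rw [tourf_up (by omega)] at hc
        have e1 : k1 + (r + 1 + j + 1) - k1 = r + 1 + j + 1 := by omega
        rw [e1] at hc
        have e2 : padc tn (dpad x0 l0 k0) (k1 + (r + 1 + j + 1) - 1)
            = padc tn (dpad x0 l0 k0) (k1 - r - 1 + j) := padc_congr (by omega)
        rwa [e2] at hc
      have := ps_step (ih (by omega)) (padc_step hEs hbE hp0 hlast _) hlu.2.1 hcross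
      have e : k1 - r - 1 + j + 1 = k1 - r - 1 + (j + 1) := by omega
      rwa [e] at this
  have final := ind (k1 - r - 1) le_rfl
  have e1 : r + 1 + (k1 - r - 1) = k1 := by omega
  have e2 : padc tn (dpad x0 l0 k0) (k1 - r - 1 + (k1 - r - 1)) = tn :=
    padc_even (by omega)
  rw [e1, e2] at final
  exact final

include hEs hbs hbE in
theorem w'_build (hp0 : IsPetal E bic x0 l0 u0 k0) (hp1 : IsPetal E bic x1 l1 u1 k1)
    (hglue : u0 k0 = l1 k1) (hlast : l0 k0 = tn)
    (hb : bic (padc tn (dpad x0 l0 k0) (k1 - 1)) x1)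
    (hall3 : ∀ m, k1 + 2 ≤ m → m ≤ 2 * k1 →
      ¬ E (padc tn (dpad x0 l0 k0) (m - 1)) (tourf x1 l1 u1 k1 m)) :
    PSeg E bic x1 (padc tn (dpad x0 l0 k0) (k1 - 1)) (u1 1) tn (u1 k1) k1 := by
  have hk1 : 0 < k1 := hp1.1
  have base := ps_start (hbs _ _ hb) hp1.2.2.1.1 hp1.2.2.1.2
  have ind : ∀ j, j ≤ k1 - 1 → PSeg E bic x1 (padc tn (dpad x0 l0 k0) (k1 - 1)) (u1 1)
      (padc tn (dpad x0 l0 k0) (k1 - 1 + j)) (u1 (1 + j)) (1 + j) := by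
    intro j
    induction j with
    | zero =>
      intro _
      simpa using base
    | succ j ih =>
      intro hj
      have hlu := hp1.2.2.2 (1 + j) (by omega) (by omega)
      have hcross : ¬ E (padc tn (dpad x0 l0 k0) (k1 - 1 + j)) (u1 (1 + j + 1)) := by
        have hc := hall3 (k1 + (1 + j + 1)) (by omega) (by omega)
        rw [tourf_up (by omega)] at hc
        have e1 : k1 + (1 + j + 1) - k1 = 1 + j + 1 := by omega
        rw [e1] at hc
        have e2 : padc tn (dpad x0 l0 k0) (k1 + (1 + j + 1) - 1)
            = padc tn (dpad x0 l0 k0) (k1 - 1 + j) := padc_congr (by omega)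
        rwa [e2] at hc
      have := ps_step (ih (by omega)) (padc_step hEs hbE hp0 hlast _) hlu.2.1 hcross
      have e : k1 - 1 + j + 1 = k1 - 1 + (j + 1) := by omega
      rwa [e] at this
  have final := ind (k1 - 1) le_rfl
  have e1 : 1 + (k1 - 1) = k1 := by omega
  have e2 : padc tn (dpad x0 l0 k0) (k1 - 1 + (k1 - 1)) = tn := padc_even (by omega)
  rw [e1, e2] at final
  exact final

end Builders


section KeyTheorem

variable {E bic : V → V → Prop}
variable (hEs : ∀ a b, E a b → E b a) (hbs : ∀ a b, bic a b → bic b a)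
variable (hbE : ∀ a b, bic a b → E a b)
variable {x0 x1 tn : V} {l0 u0 l1 u1 : ℕ → V} {k0 k1 : ℕ}

include hEs hbs hbE in
theorem key (hp0 : IsPetal E bic x0 l0 u0 k0) (hp1 : IsPetal E bic x1 l1 u1 k1)
    (hglue : u0 k0 = l1 k1) (hlast : l0 k0 = tn)
    (hasm : ∀ (y a b : V) (K : ℕ), PSeg E bic y a b tn (u1 k1) K → HasChain E bic) :
    HasChain E bic := by
  classical
  have hk0 : 0 < k0 := hp0.1
  have hk1 : 0 < k1 := hp1.1
  by_cases hall : ∀ m, 1 ≤ m → m ≤ 2 * k1 →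
      ¬ E (padc tn (dpad x0 l0 k0) (m - 1)) (tourf x1 l1 u1 k1 m)
  · exact hasm _ _ _ _ (w1_build hEs hbE hp0 hp1 hglue hlast hall)
  · push_neg at hall
    obtain ⟨m0, hm01, hm02, hm0E⟩ := hall
    have hex : ∃ m, 1 ≤ m ∧ m ≤ 2 * k1 ∧
        E (padc tn (dpad x0 l0 k0) (m - 1)) (tourf x1 l1 u1 k1 m) :=
      ⟨m0, hm01, hm02, hm0E⟩
    obtain ⟨hms1, hms2, hmsE⟩ := Nat.find_spec hex
    set mstar := Nat.find hex with hmstar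
    have hmin : ∀ m', 1 ≤ m' → m' ≤ 2 * k1 → m' < mstar →
        ¬ E (padc tn (dpad x0 l0 k0) (m' - 1)) (tourf x1 l1 u1 k1 m') := by
      intro m' a b c hE
      exact Nat.find_min hex c ⟨a, b, hE⟩
    -- the subsearch handler: given a failure at `m2` in the upper range with all
    -- conditions before `lo` available, produce a chain.
    have subfail : ∀ m2, k1 < m2 → m2 ≤ 2 * k1 →
        E (padc tn (dpad x0 l0 k0) (m2 - 1)) (tourf x1 l1 u1 k1 m2) →
        (∀ m', 1 ≤ m' → m' ≤ k1 - (m2 - k1) →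
          ¬ E (padc tn (dpad x0 l0 k0) (m' - 1)) (tourf x1 l1 u1 k1 m')) →
        HasChain E bic := by
      intro m2 hm2a hm2b hm2E hpre
      rw [tourf_up hm2a] at hm2E
      by_cases hsK : m2 = 2 * k1
      · have hd : padc tn (dpad x0 l0 k0) (m2 - 1) = dpad x0 l0 k0 :=
          padc_odd (by omega)
        rw [hd] at hm2E
        have e : m2 - k1 = k1 := by omega
        rw [e] at hm2E
        exact full_jump hEs hbs hbE hp0 hp1 hglue hlast hasm hm2E
      · have hs1 : 1 ≤ m2 - k1 := by omega
        have hs2 : m2 - k1 ≤ k1 - 1 := by omega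
        have hedge : E (padc tn (dpad x0 l0 k0) (k1 - (m2 - k1) - 1)) (u1 (m2 - k1)) := by
          have e2 : padc tn (dpad x0 l0 k0) (m2 - 1)
              = padc tn (dpad x0 l0 k0) (k1 - (m2 - k1) - 1) := padc_congr (by omega)
          rwa [e2] at hm2E
        exact jump_chain hEs hbs hbE hp0 hp1 hglue hlast hs1 hs2 hedge hpre
    rcases lt_trichotomy mstar k1 with hc | hc | hc
    · -- failure while descending the lower walk of petal 1
      have hr1 : 1 ≤ k1 - mstar := by omega
      have hr2 : k1 - mstar ≤ k1 - 1 := by omega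
      have hedge : E (padc tn (dpad x0 l0 k0) (k1 - (k1 - mstar) - 1)) (l1 (k1 - mstar)) := by
        have e1 : k1 - (k1 - mstar) - 1 = mstar - 1 := by omega
        rw [e1]
        rw [tourf_low hc] at hmsE
        exact hmsE
      by_cases hall2 : ∀ m, k1 + (k1 - mstar) + 2 ≤ m → m ≤ 2 * k1 →
          ¬ E (padc tn (dpad x0 l0 k0) (m - 1)) (tourf x1 l1 u1 k1 m)
      · exact hasm _ _ _ _ (p1'_build hEs hbE hp0 hp1 hglue hlast hr1 hr2 hedge hall2)
      · push_neg at hall2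
        obtain ⟨m2, c1, c2, c3⟩ := hall2
        refine subfail m2 (by omega) c2 c3 ?_
        intro m' a b
        exact hmin m' a (by omega) (by omega)
    · -- failure at the apex of petal 1
      have hEx1 : E (padc tn (dpad x0 l0 k0) (k1 - 1)) x1 := by
        rw [hc] at hmsE
        rw [tourf_apex] at hmsE
        exact hmsE
      by_cases hb : bic (padc tn (dpad x0 l0 k0) (k1 - 1)) x1
      · by_cases hall3 : ∀ m, k1 + 2 ≤ m → m ≤ 2 * k1 →
            ¬ E (padc tn (dpad x0 l0 k0) (m - 1)) (tourf x1 l1 u1 k1 m)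
        · exact hasm _ _ _ _ (w'_build hEs hbs hbE hp0 hp1 hglue hlast hb hall3)
        · push_neg at hall3
          obtain ⟨m2, c1, c2, c3⟩ := hall3
          refine subfail m2 (by omega) c2 c3 ?_
          intro m' a b
          exact hmin m' a (by omega) (by omega)
      · refine early_end hEs hbs hbE hp0 hp1 hglue hlast hEx1 hb ?_
        intro m' a b
        exact hmin m' a (by omega) (by omega)
    · -- failure while ascending the upper walk of petal 1
      refine subfail mstar hc hms2 hmsE ?_
      intro m' a b
      exact hmin m' a (by omega) (by omega)

end KeyTheorem


section Final

variable {E bic : V → V → Prop}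

/-- A flower with `n+1` petals. -/
def Flower (E bic : V → V → Prop) (n : ℕ) : Prop :=
  ∃ (x : Fin (n + 1) → V) (l u : Fin (n + 1) → ℕ → V) (k : Fin (n + 1) → ℕ),
    (∀ i, IsPetal E bic (x i) (l i) (u i) (k i)) ∧
    (∀ i : Fin (n + 1), u i (k i) = l (i + 1) (k (i + 1)))

variable (hEs : ∀ a b, E a b → E b a) (hbs : ∀ a b, bic a b → bic b a)
    (hbE : ∀ a b, bic a b → E a b)

theorem flower_zero (h : Flower E bic 0) : False := by
  obtain ⟨x, l, u, k, hp, hg⟩ := h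
  have hg0 := hg 0
  have e : (0 : Fin 1) + 1 = 0 := rfl
  rw [e] at hg0
  have hp0 := hp 0
  have hk := hp0.1
  by_cases hk1 : k 0 = 1
  · rw [hk1] at hg0
    exact hp0.2.2.1.2 (hg0 ▸ hp0.2.1)
  · have hl := hp0.2.2.2 (k 0 - 1) (by omega) (by omega)
    have e2 : k 0 - 1 + 1 = k 0 := by omega
    rw [e2] at hl
    exact hl.2.2 (hg0 ▸ hl.1)

include hEs hbs hbE in
theorem flower_chain : ∀ n, Flower E bic n → HasChain E bic := by
  intro n
  induction n using Nat.strong_induction_on with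
  | _ n IH =>
  intro hf
  rcases Nat.eq_zero_or_pos n with hn0 | hn0
  · subst hn0
    exact absurd hf (flower_zero)
  obtain ⟨m, rfl⟩ : ∃ m, n = m + 1 := ⟨n - 1, by omega⟩
  obtain ⟨x, l, u, k, hp, hg⟩ := hf
  have hg0 := hg 0
  have e01 : (0 : Fin (m + 1 + 1)) + 1 = (1 : Fin (m + 1 + 1)) := by
    apply Fin.ext
    rw [Fin.val_add, Fin.val_one]
    simp only [Fin.val_zero, Nat.zero_add]
    rw [Nat.mod_eq_of_lt (by omega)]
  rw [e01] at hg0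
  have hglast := hg (Fin.last (m + 1))
  have elast : Fin.last (m + 1) + 1 = (0 : Fin (m + 1 + 1)) := by
    apply Fin.ext
    rw [Fin.val_add, Fin.val_one]
    simp only [Fin.val_last, Fin.val_zero]
    exact Nat.mod_self _
  rw [elast] at hglast
  refine key hEs hbs hbE (hp 0) (hp 1) hg0 hglast.symm ?_
  intro y a b K hQ
  obtain ⟨lq, uq, hpq, _, _, hlq, huq⟩ := hQ
  refine IH m (by omega) ?_
  rcases Nat.eq_zero_or_pos m with hm0 | hm0
  · -- one petal: it glues to itself
    subst hm0
    refine ⟨fun _ => y, fun _ => lq, fun _ => uq, fun _ => K, fun _ => hpq, ?_⟩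
    intro j
    show uq K = lq K
    rw [huq, hlq]
    have e1 : (1 : Fin 2) = Fin.last 1 := rfl
    rw [e1]
  · obtain ⟨m', rfl⟩ : ∃ m', m = m' + 1 := ⟨m - 1, by omega⟩
    refine ⟨Fin.cases y (fun i => x i.succ.succ),
            Fin.cases lq (fun i => l i.succ.succ),
            Fin.cases uq (fun i => u i.succ.succ),
            Fin.cases K (fun i => k i.succ.succ), ?_, ?_⟩
    · intro j
      induction j using Fin.cases with
      | zero => simpa using hpq
      | succ i => simpa using hp _
    · intro j
      induction j using Fin.cases with
      | zero =>
        have e : (0 : Fin (m' + 1 + 1)) + 1 = (0 : Fin (m' + 1)).succ := by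
          apply Fin.ext
          rw [Fin.val_add, Fin.val_one]
          simp only [Fin.val_zero, Fin.val_succ, Nat.zero_add]
          rw [Nat.mod_eq_of_lt (by omega)]
        rw [e]
        simp only [Fin.cases_zero, Fin.cases_succ]
        rw [huq]
        have e2 : (0 : Fin (m' + 1)).succ.succ = (1 : Fin (m' + 1 + 1 + 1)) + 1 := by
          apply Fin.ext
          rw [Fin.val_add, Fin.val_one]
          simp only [Fin.val_succ, Fin.val_zero]
          rw [Nat.mod_eq_of_lt (by omega)]
        rw [e2]
        exact hg 1
      | succ i =>
        induction i using Fin.lastCases with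
        | last =>
          have e : (Fin.last m').succ + 1 = (0 : Fin (m' + 1 + 1)) := by
            apply Fin.ext
            rw [Fin.val_add, Fin.val_one]
            simp only [Fin.val_succ, Fin.val_last, Fin.val_zero]
            exact Nat.mod_self _
          rw [e]
          simp only [Fin.cases_zero, Fin.cases_succ]
          have esucc : (Fin.last m').succ.succ = Fin.last (m' + 1 + 1) := by
            apply Fin.ext
            simp only [Fin.val_succ, Fin.val_last]
          rw [esucc]
          exact hlq.symm
        | cast i' =>
          have hi' : i'.val < m' := i'.2
          have e : (Fin.castSucc i').succ + 1 = (i'.succ).succ := by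
            apply Fin.ext
            rw [Fin.val_add, Fin.val_one]
            simp only [Fin.val_succ, Fin.coe_castSucc]
            rw [Nat.mod_eq_of_lt (by omega)]
          rw [e]
          simp only [Fin.cases_succ]
          have e2 : ((Fin.castSucc i').succ.succ) + 1 = (i'.succ).succ.succ := by
            apply Fin.ext
            rw [Fin.val_add, Fin.val_one]
            simp only [Fin.val_succ, Fin.coe_castSucc]
            rw [Nat.mod_eq_of_lt (by omega)]
          rw [← e2]
          exact hg _

end Final

end Statement5

/-- if a signed graph without purely red edges contains a flower
`P_1, …, P_n` (petals, indexed cyclically, in which the upper terminal of each petal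
equals the lower terminal of the next petal), then it contains a chain. -/
theorem statement5 [Fintype V] (E bic : V → V → Prop)
    (hEsymm : ∀ x y, E x y → E y x) (hbicsymm : ∀ x y, bic x y → bic y x)
    (hbicE : ∀ x y, bic x y → E x y)
    (n : ℕ) (x : Fin (n + 1) → V) (l u : Fin (n + 1) → ℕ → V) (k : Fin (n + 1) → ℕ)
    (hpetal : ∀ i, IsPetal E bic (x i) (l i) (u i) (k i))
    (hglue : ∀ i : Fin (n + 1), u i (k i) = l (i + 1) (k (i + 1))) :
    HasChain E bic :=
  Statement5.flower_chain hEsymm hbicsymm hbicE n ⟨x, l, u, k, hpetal, hglue⟩
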